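/- arXiv:2509.19114 — 2 statements merged into one kernel-verified Lean document; each statement's English description precedes it below -/
import Mathlib

section
/- For every positive integer n, the sum over i from 1 to n of 2 q^{i-1} ((1-q^{i-1})/(1-q))^2 · ((1-q^{i-2})/(1-q) + (1-q^i)/(1-q)) equals (2q + 2q^2) times the square of the q-binomial coefficient [n choose 2]_q. -/
/-!
The sum telescopes: with `x = q ^ (m - 1)`, the `m`-th summand equals
`(2q + 2q²) ([m choose 2]_q² - [m - 1 choose 2]_q²)`, which after clearing the denominators
`1 - q`, `1 - q²` and `q` is a polynomial identity in `q` and `x`.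
-/

/-- The field of rational functions in q over ℚ. -/
noncomputable def q : RatFunc ℚ := RatFunc.X

open Finset

open Polynomial in
theorem RatFunc.one_sub_X_pow_ne_zero {K : Type*} [Field K] {k : ℕ} (hk : 0 < k) :
    (1 : RatFunc K) - RatFunc.X ^ k ≠ 0 := by
  rw [sub_ne_zero, ne_comm, ← RatFunc.algebraMap_X, ← map_pow,
    ← map_one (algebraMap K[X] (RatFunc K)), (RatFunc.algebraMap_injective K).ne_iff,
    ← sub_ne_zero, ← Polynomial.C_1]
  exact Polynomial.X_pow_sub_C_ne_zero hk 1

section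

variable {K : Type*} [Field K]

def qChooseTwo (q : K) (m : ℤ) : K :=
  (1 - q ^ m) * (1 - q ^ (m - 1)) / ((1 - q) * (1 - q ^ 2))

variable {q : K}

theorem qCube_summand_eq_sub (hq : q ≠ 0) (hq₁ : 1 - q ≠ 0) (hq₂ : 1 - q ^ 2 ≠ 0) (m : ℤ) :
    2 * q ^ (m - 1) * ((1 - q ^ (m - 1)) / (1 - q)) ^ 2 *
        ((1 - q ^ (m - 2)) / (1 - q) + (1 - q ^ m) / (1 - q)) =
      (2 * q + 2 * q ^ 2) * (qChooseTwo q m ^ 2 - qChooseTwo q (m - 1) ^ 2) := by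
  have hm : q ^ m = q ^ (m - 2) * q ^ 2 := by rw [← zpow_natCast, ← zpow_add₀ hq]; ring_nf
  have hm₁ : q ^ (m - 1) = q ^ (m - 2) * q := by rw [← zpow_add_one₀ hq]; ring_nf
  have hm₁₁ : m - 1 - 1 = m - 2 := by ring
  simp only [qChooseTwo, hm₁₁, hm, hm₁]
  field_simp
  ring

theorem sum_qCube_summand_eq (hq : q ≠ 0) (hq₁ : 1 - q ≠ 0) (hq₂ : 1 - q ^ 2 ≠ 0) (n : ℕ) :
    ∑ i ∈ Icc 1 n,
        2 * q ^ ((i : ℤ) - 1) * ((1 - q ^ ((i : ℤ) - 1)) / (1 - q)) ^ 2 *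
          ((1 - q ^ ((i : ℤ) - 2)) / (1 - q) + (1 - q ^ (i : ℤ)) / (1 - q)) =
      (2 * q + 2 * q ^ 2) * qChooseTwo q n ^ 2 := by
  induction n with
  | zero => simp [qChooseTwo]
  | succ n ih =>
    rw [sum_Icc_succ_top (by omega), ih, qCube_summand_eq_sub hq hq₁ hq₂, Nat.cast_succ,
      add_sub_cancel_right]
    ring

end

theorem forster_garrett_jacobsen_wood_q_analogue_general (n : ℕ) :
    (∑ i ∈ Finset.Icc 1 n,
        2 * q ^ ((i : ℤ) - 1) * ((1 - q ^ ((i : ℤ) - 1)) / (1 - q)) ^ 2 *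
          ((1 - q ^ ((i : ℤ) - 2)) / (1 - q) + (1 - q ^ (i : ℤ)) / (1 - q)))
      = (2 * q + 2 * q ^ 2) *
          ((1 - q ^ (n : ℤ)) * (1 - q ^ ((n : ℤ) - 1)) / ((1 - q) * (1 - q ^ 2))) ^ 2 := by
  have hq₁ : 1 - q ≠ 0 := by simpa [q] using RatFunc.one_sub_X_pow_ne_zero (K := ℚ) one_pos
  exact sum_qCube_summand_eq RatFunc.X_ne_zero hq₁ (RatFunc.one_sub_X_pow_ne_zero two_pos) n

theorem forster_garrett_jacobsen_wood_q_analogue (n : ℕ) (hn : 0 < n) :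
    (∑ i ∈ Finset.Icc 1 n,
        2 * q ^ ((i : ℤ) - 1) * ((1 - q ^ ((i : ℤ) - 1)) / (1 - q)) ^ 2 *
          ((1 - q ^ ((i : ℤ) - 2)) / (1 - q) + (1 - q ^ (i : ℤ)) / (1 - q)))
      = (2 * q + 2 * q ^ 2) *
          ((1 - q ^ (n : ℤ)) * (1 - q ^ ((n : ℤ) - 1)) / ((1 - q) * (1 - q ^ 2))) ^ 2 :=
  forster_garrett_jacobsen_wood_q_analogue_general n
end

section
/- For every positive integer n and each integer 1 ≤ k ≤ n, the sum of q^{(a-1)+(b-2)+(c-1)+(d-1)} over 4-tuples (a,b,c,d) with b = k+1, 1 ≤ a ≤ k, and 1 ≤ d ≤ c ≤ k, multiplied by (1+q), equals [k]_q · q^{k-1} · [k+1]_q · [k]_q. -/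
/-!
The weight factors as `q^(a-1) · q^(k-1) · q^((c-1)+(d-1))`, so the sum is `[k]_q · q^(k-1)`
times the triangular sum `T_k = ∑_{1 ≤ d ≤ c ≤ k} q^((c-1)+(d-1))`. The row `c = k+1` adds
`q^k [k+1]_q`, and `[k+2]_q [k+1]_q - [k+1]_q [k]_q = (1+q) q^k [k+1]_q`, so
`(1+q) T_k = [k+1]_q [k]_q` by induction.
-/

open Polynomial

/-- The q-analogue [m]_q = 1 + q + ... + q^{m-1} as a polynomial in q = X. -/
noncomputable def qa (m : ℕ) : Polynomial ℤ := ∑ j ∈ Finset.range m, X ^ j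

open Finset

lemma qa_succ (m : ℕ) : qa (m + 1) = qa m + X ^ m := by
  simp [qa, sum_range_succ]

lemma sum_Icc_one_X_pow_sub_one (m : ℕ) : ∑ a ∈ Icc 1 m, (X : ℤ[X]) ^ (a - 1) = qa m := by
  rw [← Ico_add_one_right_eq_Icc, sum_Ico_eq_sum_range]
  simp [qa]

lemma sum_filter_le_Icc_product {M : Type*} [AddCommMonoid M] (k : ℕ) (f : ℕ → ℕ → M) :
    ∑ p ∈ (Icc 1 k ×ˢ Icc 1 k).filter (fun p : ℕ × ℕ => p.2 ≤ p.1), f p.1 p.2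
      = ∑ c ∈ Icc 1 k, ∑ d ∈ Icc 1 c, f c d := by
  rw [sum_filter, sum_product]
  refine sum_congr rfl fun c hc => ?_
  rw [← sum_filter]
  congr 1
  ext d
  simp only [mem_filter, mem_Icc] at hc ⊢
  omega

lemma one_add_X_mul_sum_triangle (k : ℕ) :
    (1 + X) * ∑ c ∈ Icc 1 k, ∑ d ∈ Icc 1 c, (X : ℤ[X]) ^ ((c - 1) + (d - 1))
      = qa (k + 1) * qa k := by
  induction k with
  | zero => simp [qa]
  | succ k ih =>
    have top_row : ∑ d ∈ Icc 1 (k + 1), (X : ℤ[X]) ^ ((k + 1 - 1) + (d - 1))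
        = X ^ k * qa (k + 1) := by
      simp only [add_tsub_cancel_right, pow_add, ← mul_sum, sum_Icc_one_X_pow_sub_one]
    rw [sum_Icc_succ_top (by omega), mul_add, ih, top_row, qa_succ (k + 1), qa_succ k]
    ring

lemma sum_layer_eq_mul_sum_triangle (k : ℕ) :
    ∑ p ∈ (Icc 1 k ×ˢ Icc (k + 1) (k + 1) ×ˢ Icc 1 k ×ˢ Icc 1 k).filter
        (fun p : ℕ × ℕ × ℕ × ℕ => p.2.2.2 ≤ p.2.2.1),
        (X : ℤ[X]) ^ ((p.1 - 1) + (p.2.1 - 2) + (p.2.2.1 - 1) + (p.2.2.2 - 1))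
      = qa k * X ^ (k - 1) * ∑ c ∈ Icc 1 k, ∑ d ∈ Icc 1 c, (X : ℤ[X]) ^ ((c - 1) + (d - 1)) := by
  rw [filter_product_right (fun p : ℕ × ℕ × ℕ => p.2.2 ≤ p.2.1),
    filter_product_right (fun p : ℕ × ℕ => p.2 ≤ p.1), sum_product,
    ← sum_Icc_one_X_pow_sub_one k, sum_mul, sum_mul]
  refine sum_congr rfl fun a _ => ?_
  rw [sum_product, Icc_self, sum_singleton]
  dsimp only
  rw [show k + 1 - 2 = k - 1 by omega,
    sum_filter_le_Icc_product k fun c d => (X : ℤ[X]) ^ ((a - 1) + (k - 1) + (c - 1) + (d - 1))]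
  simp only [mul_sum, add_assoc, pow_add, mul_assoc]

theorem taxicab_qcount_layer_general (k : ℕ) :
    (1 + X) * (∑ p ∈ (Finset.Icc 1 k ×ˢ Finset.Icc (k + 1) (k + 1) ×ˢ
              Finset.Icc 1 k ×ˢ Finset.Icc 1 k).filter
        (fun p : ℕ × ℕ × ℕ × ℕ => p.2.2.2 ≤ p.2.2.1),
        (X : Polynomial ℤ) ^ ((p.1 - 1) + (p.2.1 - 2) + (p.2.2.1 - 1) + (p.2.2.2 - 1)))
      = qa k * X ^ (k - 1) * (qa (k + 1) * qa k) := by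
  rw [sum_layer_eq_mul_sum_triangle, ← one_add_X_mul_sum_triangle]
  ring

theorem taxicab_qcount_layer (n k : ℕ) (hk : 1 ≤ k) (hkn : k ≤ n) :
    (1 + X) * (∑ p ∈ (Finset.Icc 1 k ×ˢ Finset.Icc (k + 1) (k + 1) ×ˢ
              Finset.Icc 1 k ×ˢ Finset.Icc 1 k).filter
        (fun p : ℕ × ℕ × ℕ × ℕ => p.2.2.2 ≤ p.2.2.1),
        (X : Polynomial ℤ) ^ ((p.1 - 1) + (p.2.1 - 2) + (p.2.2.1 - 1) + (p.2.2.2 - 1)))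
      = qa k * X ^ (k - 1) * (qa (k + 1) * qa k) :=
  taxicab_qcount_layer_general k
end
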